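/- arXiv:0802.2741 — 5 statements merged into one kernel-verified Lean document; each statement's English description precedes it below -/
import Mathlib

section
/- Let ψ = (P,Q) : ℝ^m → ℝ² be real analytic on an open neighborhood U of 0 with ψ(0) = 0 and having an isolated critical point at 0. Then for every ε > 0 such that the closed ball of radius ε is contained in U, there exists M > 0 such that for all x with ‖x‖ = ε and ψ(x) ≠ 0, ‖P(x)∇P(x) + Q(x)∇Q(x)‖ ≤ M · ‖P(x)∇Q(x) − Q(x)∇P(x)‖. -/
open scoped RealInnerProductSpace

noncomputable section

/-!
On the sphere `‖x‖ = ε` the gradients `∇P x`, `∇Q x` depend continuously on `x` and are linearly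
independent, so by compactness the maps `(a, b) ↦ a • ∇P x + b • ∇Q x` are bounded above and
below uniformly in `x`: `c ‖(a, b)‖ ≤ ‖a • ∇P x + b • ∇Q x‖ ≤ C ‖(a, b)‖`. Both sides of the
inequality are values of this map, at `(P x, Q x)` and at `(-Q x, P x)`, which have the same norm.
-/

open ContinuousLinearMap

section UniformInjectivity

variable {X F E : Type*} [TopologicalSpace X] [NormedAddCommGroup F] [NormedSpace ℝ F]
  [ProperSpace F] [NormedAddCommGroup E] [NormedSpace ℝ E] {K : Set X} {T : X → F →L[ℝ] E}

theorem IsCompact.exists_pos_mul_norm_le_norm_apply (hK : IsCompact K) (hT : ContinuousOn T K)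
    (hinj : ∀ x ∈ K, Function.Injective (T x)) :
    ∃ c > 0, ∀ x ∈ K, ∀ y, c * ‖y‖ ≤ ‖T x y‖ := by
  have hcont : ContinuousOn (fun p : X × F => ‖T p.1 p.2‖) (K ×ˢ Metric.sphere 0 1) :=
    ((hT.comp continuousOn_fst fun _ hp => hp.1).clm_apply continuousOn_snd).norm
  obtain ⟨c, hc, hcK⟩ := (hK.prod (isCompact_sphere 0 1)).exists_forall_le' hcont (a := 0) <| by
    rintro ⟨x, y⟩ ⟨hx, hy⟩
    refine norm_pos_iff.2 fun h => ?_
    have hy0 : y = 0 := hinj x hx (by simpa using h)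
    simp [hy0] at hy
  refine ⟨c, hc, fun x hx y => ?_⟩
  rcases eq_or_ne y 0 with rfl | hy
  · simp
  have hunit : ‖y‖⁻¹ • y ∈ Metric.sphere (0 : F) 1 := by simp [norm_smul, hy]
  calc c * ‖y‖ ≤ ‖T x (‖y‖⁻¹ • y)‖ * ‖y‖ := by gcongr; exact hcK (x, _) ⟨hx, hunit⟩
    _ = ‖T x y‖ := by
      rw [map_smul, norm_smul, norm_inv, norm_norm]
      field_simp

theorem IsCompact.exists_norm_apply_le_mul_norm_apply (hK : IsCompact K)
    (hT : ContinuousOn T K) (hinj : ∀ x ∈ K, Function.Injective (T x)) :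
    ∃ M > 0, ∀ x ∈ K, ∀ y z, ‖y‖ ≤ ‖z‖ → ‖T x y‖ ≤ M * ‖T x z‖ := by
  obtain ⟨c, hc, hlow⟩ := hK.exists_pos_mul_norm_le_norm_apply hT hinj
  obtain ⟨C, hC⟩ := hK.exists_bound_of_continuousOn hT
  refine ⟨max C 1 / c, by positivity, fun x hx y z hyz => ?_⟩
  calc ‖T x y‖ ≤ ‖T x‖ * ‖y‖ := (T x).le_opNorm y
    _ ≤ max C 1 * ‖z‖ := by gcongr; exact (hC x hx).trans (le_max_left _ _)
    _ = max C 1 / c * (c * ‖z‖) := by field_simp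
    _ ≤ max C 1 / c * ‖T x z‖ := by gcongr; exact hlow x hx z

end UniformInjectivity

section GradientPair

variable {E : Type*} [NormedAddCommGroup E] [InnerProductSpace ℝ E] [CompleteSpace E]
  {f g : E → ℝ}

/-- The adjoint of `D(f, g)(x)` when `ℝ × ℝ` is given its Euclidean structure. -/
def gradientPair (f g : E → ℝ) (x : E) : ℝ × ℝ →L[ℝ] E :=
  (toSpanSingleton ℝ (gradient f x)).coprod (toSpanSingleton ℝ (gradient g x))

@[simp]
theorem gradientPair_apply (x : E) (a b : ℝ) :
    gradientPair f g x (a, b) = a • gradient f x + b • gradient g x := by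
  simp [gradientPair]

theorem injective_gradientPair {x : E} (hf : DifferentiableAt ℝ f x)
    (hg : DifferentiableAt ℝ g x)
    (hsurj : Function.Surjective (fderiv ℝ (fun y => (f y, g y)) x)) :
    Function.Injective (gradientPair f g x) := by
  refine (injective_iff_map_eq_zero _).2 fun ⟨a, b⟩ hab => ?_
  obtain ⟨v, hv⟩ := hsurj (a, b)
  rw [(hf.hasFDerivAt.prodMk hg.hasFDerivAt).fderiv] at hv
  have hfv : fderiv ℝ f x v = a := congrArg Prod.fst hv
  have hgv : fderiv ℝ g x v = b := congrArg Prod.snd hv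
  have hsq : a * a + b * b = 0 := by
    have h := congrArg (⟪·, v⟫) hab
    simp only [gradientPair_apply, inner_add_left, real_inner_smul_left, inner_gradient_left,
      inner_zero_left] at h
    rwa [hfv, hgv] at h
  simp only [Prod.mk_eq_zero]
  constructor <;> nlinarith

theorem ContinuousOn.gradientPair {s : Set E} (hf : ContinuousOn (fderiv ℝ f) s)
    (hg : ContinuousOn (fderiv ℝ g) s) : ContinuousOn (gradientPair f g) s := by
  have hgrad : ∀ {h : E → ℝ}, ContinuousOn (fderiv ℝ h) s → ContinuousOn (gradient h) s :=
    fun hh => (InnerProductSpace.toDual ℝ E).symm.continuous.comp_continuousOn hh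
  have hspan : ∀ {h : E → ℝ}, ContinuousOn (fderiv ℝ h) s →
      ContinuousOn (fun x => toSpanSingleton ℝ (gradient h x)) s :=
    fun hh => toSpanSingletonCLE.continuous.comp_continuousOn (hgrad hh)
  refine ((coprodEquivL (S := ℝ)).continuous.comp_continuousOn
    ((hspan hf).prodMk (hspan hg))).congr fun x _ => ?_
  rfl

end GradientPair

theorem stmt_3_general {m : ℕ} (P Q : EuclideanSpace ℝ (Fin m) → ℝ)
    (U : Set (EuclideanSpace ℝ (Fin m)))
    (hanal : AnalyticOnNhd ℝ (fun x => ((P x, Q x) : ℝ × ℝ)) U)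
    (hreg : ∀ x ∈ U \ {(0 : EuclideanSpace ℝ (Fin m))},
      Function.Surjective (fderiv ℝ (fun y => ((P y, Q y) : ℝ × ℝ)) x)) :
    ∀ ε > 0, Metric.closedBall (0 : EuclideanSpace ℝ (Fin m)) ε ⊆ U →
      ∃ M > 0, ∀ x : EuclideanSpace ℝ (Fin m), ‖x‖ = ε → ¬(P x = 0 ∧ Q x = 0) →
        ‖P x • gradient P x + Q x • gradient Q x‖ ≤
          M * ‖P x • gradient Q x - Q x • gradient P x‖ := by
  intro ε hε hball
  have hsphere : Metric.sphere 0 ε ⊆ U \ {0} := fun x hx =>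
    ⟨hball (Metric.sphere_subset_closedBall hx), by rintro rfl; simp [hε.ne] at hx⟩
  have hPa : AnalyticOnNhd ℝ P U := fun x hx => analyticAt_fst.comp (hanal x hx)
  have hQa : AnalyticOnNhd ℝ Q U := fun x hx => analyticAt_snd.comp (hanal x hx)
  obtain ⟨M, hM, hbound⟩ := (isCompact_sphere 0 ε).exists_norm_apply_le_mul_norm_apply
    ((hPa.fderiv.continuousOn.gradientPair hQa.fderiv.continuousOn).mono
      (hsphere.trans Set.sdiff_subset))
    fun x hx => injective_gradientPair (hPa x (hsphere hx).1).differentiableAt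
      (hQa x (hsphere hx).1).differentiableAt (hreg x (hsphere hx))
  refine ⟨M, hM, fun x hx _ => ?_⟩
  have h := hbound x (by simpa using hx) (P x, Q x) (-Q x, P x)
    (by simp [Prod.norm_def, max_comm])
  simpa [neg_smul, sub_eq_neg_add] using h

/-- Let `ψ = (P,Q)` be real analytic on an open neighborhood `U` of `0` with
`ψ(0) = 0` and isolated critical point at `0`. Then for every `ε > 0` with the closed ball
of radius `ε` contained in `U`, there is `M > 0` such that for all `x` with `‖x‖ = ε` and
`ψ(x) ≠ 0`, `‖P(x)∇P(x) + Q(x)∇Q(x)‖ ≤ M·‖P(x)∇Q(x) − Q(x)∇P(x)‖`. -/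
theorem stmt_3 {m : ℕ} (P Q : EuclideanSpace ℝ (Fin m) → ℝ)
    (U : Set (EuclideanSpace ℝ (Fin m))) (hUopen : IsOpen U)
    (hU0 : (0 : EuclideanSpace ℝ (Fin m)) ∈ U)
    (hP0 : P 0 = 0) (hQ0 : Q 0 = 0)
    (hanal : AnalyticOnNhd ℝ (fun x => ((P x, Q x) : ℝ × ℝ)) U)
    (hreg : ∀ x ∈ U \ {(0 : EuclideanSpace ℝ (Fin m))},
      Function.Surjective (fderiv ℝ (fun y => ((P y, Q y) : ℝ × ℝ)) x)) :
    ∀ ε > 0, Metric.closedBall (0 : EuclideanSpace ℝ (Fin m)) ε ⊆ U →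
      ∃ M > 0, ∀ x : EuclideanSpace ℝ (Fin m), ‖x‖ = ε → ¬(P x = 0 ∧ Q x = 0) →
        ‖P x • gradient P x + Q x • gradient Q x‖ ≤
          M * ‖P x • gradient Q x - Q x • gradient P x‖ :=
  stmt_3_general P Q U hanal hreg
end
end

section
/- Let P, Q : ℝ^m → ℝ be differentiable at x with x ≠ 0, (P(x), Q(x)) ≠ (0,0), and ∇P(x), ∇Q(x) linearly independent. Let 0 < ρ ≤ 1 and let θ ∈ ℝ satisfy cos θ · P(x) = sin θ · Q(x) and |⟨∇Ψ_θ(x), x⟩| ≤ (1−ρ)·‖∇Ψ_θ(x)‖·‖x‖, where ∇Ψ_θ(x) = cos θ · ∇P(x) − sin θ · ∇Q(x). Then γ(x) := P(x)∇Q(x) − Q(x)∇P(x) satisfies |⟨γ(x), x⟩| ≤ (1−ρ)·‖γ(x)‖·‖x‖, and γ(x) is not a scalar multiple of x. -/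
/-!
Since `cos θ · P(x) = sin θ · Q(x)`, the pair `(P(x), Q(x))` is `t · (sin θ, cos θ)`, so
`γ(x) = −t · ∇Ψ_θ(x)`, and the angle condition is invariant under scaling. A multiple `c • x`
makes angle `0` or `π` with `x`, which `ρ > 0` rules out unless `γ(x) = 0`; and `γ(x) ≠ 0`
because `∇P(x), ∇Q(x)` are independent and `(P(x), Q(x)) ≠ 0`.
-/

open scoped RealInnerProductSpace

open Real in
/-- Here `(a, b) = t · (sin θ, cos θ)` with `t = a sin θ + b cos θ`. -/
lemma smul_sub_smul_eq_smul_of_cos_mul_eq {E : Type*} [AddCommGroup E] [Module ℝ E]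
    {a b θ : ℝ} (h : cos θ * a = sin θ * b) (u v : E) :
    a • v - b • u = -(a * sin θ + b * cos θ) • (cos θ • u - sin θ • v) := by
  linear_combination (norm := module) h • (cos θ • v + sin θ • u) +
    sin_sq_add_cos_sq θ • (b • u - a • v)

section AngleBound

variable {F : Type*} [NormedAddCommGroup F] [InnerProductSpace ℝ F]

lemma abs_inner_smul_left_le {v x : F} {k : ℝ} (c : ℝ) (h : |⟪v, x⟫| ≤ k * ‖v‖ * ‖x‖) :
    |⟪c • v, x⟫| ≤ k * ‖c • v‖ * ‖x‖ := by
  rw [real_inner_smul_left, norm_smul, Real.norm_eq_abs, abs_mul]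
  calc |c| * |⟪v, x⟫| ≤ |c| * (k * ‖v‖ * ‖x‖) := by gcongr
    _ = k * (|c| * ‖v‖) * ‖x‖ := by ring

lemma eq_zero_of_abs_inner_le_of_eq_smul {v x : F} {ρ c : ℝ} (hρ : 0 < ρ)
    (h : |⟪v, x⟫| ≤ (1 - ρ) * ‖v‖ * ‖x‖) (hv : v = c • x) : v = 0 := by
  subst hv
  rw [real_inner_smul_left, real_inner_self_eq_norm_sq, norm_smul, Real.norm_eq_abs, abs_mul,
    abs_of_nonneg (sq_nonneg ‖x‖)] at h
  have hneg : ρ * (|c| * ‖x‖ ^ 2) ≤ 0 := by nlinarith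
  have hzero : |c| * ‖x‖ ^ 2 = 0 :=
    le_antisymm (nonpos_of_mul_nonpos_right hneg hρ) (by positivity)
  simpa [abs_eq_zero, sq_eq_zero_iff, norm_eq_zero] using hzero

end AngleBound

theorem stmt_6_general {m : ℕ} (P Q : EuclideanSpace ℝ (Fin m) → ℝ) (x : EuclideanSpace ℝ (Fin m))
    (hpq : (P x, Q x) ≠ (0, 0))
    (hli : LinearIndependent ℝ ![gradient P x, gradient Q x])
    (ρ : ℝ) (hρ0 : 0 < ρ) (θ : ℝ)
    (hθ : Real.cos θ * P x = Real.sin θ * Q x)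
    (hang : |⟪Real.cos θ • gradient P x - Real.sin θ • gradient Q x, x⟫| ≤
      (1 - ρ) * ‖Real.cos θ • gradient P x - Real.sin θ • gradient Q x‖ * ‖x‖) :
    |⟪P x • gradient Q x - Q x • gradient P x, x⟫| ≤
      (1 - ρ) * ‖P x • gradient Q x - Q x • gradient P x‖ * ‖x‖ ∧
    ¬∃ c : ℝ, P x • gradient Q x - Q x • gradient P x = c • x := by
  have hbound : |⟪P x • gradient Q x - Q x • gradient P x, x⟫| ≤
      (1 - ρ) * ‖P x • gradient Q x - Q x • gradient P x‖ * ‖x‖ := by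
    rw [smul_sub_smul_eq_smul_of_cos_mul_eq hθ]
    exact abs_inner_smul_left_le _ hang
  refine ⟨hbound, fun ⟨c, hc⟩ ↦ hpq ?_⟩
  have hγ := eq_zero_of_abs_inner_le_of_eq_smul hρ0 hbound hc
  obtain ⟨hQ, hP⟩ := LinearIndependent.pair_iff.1 hli (-Q x) (P x) (by rw [← hγ]; module)
  simp [hP, neg_eq_zero.1 hQ]

/-- Under the hypotheses of the uniform (m)-condition at `x` for the angle `θ`
with `cos θ · P(x) = sin θ · Q(x)`, the vector `γ(x) := P(x)∇Q(x) − Q(x)∇P(x)` satisfies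
`|⟪γ(x), x⟫| ≤ (1−ρ)·‖γ(x)‖·‖x‖`, and `γ(x)` is not a scalar multiple of `x`. -/
theorem stmt_6 {m : ℕ} (P Q : EuclideanSpace ℝ (Fin m) → ℝ) (x : EuclideanSpace ℝ (Fin m))
    (hP : DifferentiableAt ℝ P x) (hQ : DifferentiableAt ℝ Q x)
    (hx : x ≠ 0) (hpq : (P x, Q x) ≠ (0, 0))
    (hli : LinearIndependent ℝ ![gradient P x, gradient Q x])
    (ρ : ℝ) (hρ0 : 0 < ρ) (hρ1 : ρ ≤ 1) (θ : ℝ)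
    (hθ : Real.cos θ * P x = Real.sin θ * Q x)
    (hang : |⟪Real.cos θ • gradient P x - Real.sin θ • gradient Q x, x⟫| ≤
      (1 - ρ) * ‖Real.cos θ • gradient P x - Real.sin θ • gradient Q x‖ * ‖x‖) :
    |⟪P x • gradient Q x - Q x • gradient P x, x⟫| ≤
      (1 - ρ) * ‖P x • gradient Q x - Q x • gradient P x‖ * ‖x‖ ∧
    ¬∃ c : ℝ, P x • gradient Q x - Q x • gradient P x = c • x :=
  stmt_6_general P Q x hpq hli ρ hρ0 θ hθ hang
end

section
/- Let ψ = (P,Q) : ℝ^m → ℝ² be differentiable at x with ψ(x) ≠ 0 and x ≠ 0, and let φ(y) = ψ(y)/‖ψ(y)‖ (defined near x). Then the differential of φ at x vanishes on the tangent space {v ∈ ℝ^m : ⟨v, x⟩ = 0} of the sphere through x if and only if γ(x) := P(x)∇Q(x) − Q(x)∇P(x) is a scalar multiple of x. In particular, if γ(x) is not a scalar multiple of x, there exists v with ⟨v, x⟩ = 0 and Dφ(x)(v) ≠ 0. -/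
/-!
Differentiating `φ = ‖ψ‖⁻¹ • ψ` gives `Dφ(x) v = ‖ψ x‖⁻¹ • (w - proj_{ψ x} w)` with
`w = Dψ(x) v`, so `Dφ(x) v = 0` iff `w` is parallel to `ψ x`. In the plane this is the vanishing
of the cross product `P x * DQ(x) v - Q x * DP(x) v = ⟪γ(x), v⟫`. Hence `Dφ(x)` vanishes on
`(ℝ ∙ x)ᗮ` iff `γ(x) ∈ (ℝ ∙ x)ᗮᗮ = ℝ ∙ x`.
-/

open scoped RealInnerProductSpace

noncomputable section

/-- `ψ = (P,Q)` as a map into the Euclidean plane. -/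
def psiMap {m : ℕ} (P Q : EuclideanSpace ℝ (Fin m) → ℝ) (x : EuclideanSpace ℝ (Fin m)) :
    EuclideanSpace ℝ (Fin 2) :=
  (WithLp.equiv 2 (Fin 2 → ℝ)).symm ![P x, Q x]

section InvNormSMul

variable {E F : Type*} [NormedAddCommGroup E] [NormedSpace ℝ E]
  [NormedAddCommGroup F] [InnerProductSpace ℝ F]

theorem HasFDerivAt.inv_norm_smul {f : E → F} {f' : E →L[ℝ] F} {x : E}
    (hf : HasFDerivAt f f' x) (h0 : f x ≠ 0) :
    HasFDerivAt (fun y => ‖f y‖⁻¹ • f y)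
      (‖f x‖⁻¹ • f' - (‖f x‖ ^ 3)⁻¹ • ((innerSL ℝ (f x)).comp f').smulRight (f x)) x := by
  have hsqrt : HasFDerivAt (fun y => Real.sqrt (‖f y‖ ^ 2)) _ x :=
    (Real.hasDerivAt_sqrt (by positivity)).comp_hasFDerivAt x hf.norm_sq
  have hinv := (hasDerivAt_inv (by positivity)).comp_hasFDerivAt x hsqrt
  simp only [Real.sqrt_sq (norm_nonneg _)] at hinv
  refine (hinv.smul hf).congr_fderiv ?_
  ext v
  simp only [Function.comp_apply, one_div, mul_inv_rev, neg_smul, add_apply, smul_apply,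
    ContinuousLinearMap.smulRight_apply, neg_apply, ContinuousLinearMap.comp_apply,
    coe_innerSL_apply, nsmul_eq_mul, Nat.cast_ofNat, smul_eq_mul, sub_apply]
  match_scalars <;> ring

theorem inv_norm_smul_sub_inner_smul_eq_zero_iff {u w : F} (hu : u ≠ 0) :
    ‖u‖⁻¹ • w - (‖u‖ ^ 3)⁻¹ • ⟪u, w⟫ • u = 0 ↔ w ∈ ℝ ∙ u := by
  have hN : ‖u‖ ≠ 0 := norm_ne_zero_iff.2 hu
  have hproj : ‖u‖ ^ 2 • (ℝ ∙ u).starProjection w = ⟪u, w⟫ • u := by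
    simpa using Submodule.smul_starProjection_singleton ℝ (v := u) w
  have hdiff : ‖u‖⁻¹ • w - (‖u‖ ^ 3)⁻¹ • ⟪u, w⟫ • u
      = ‖u‖⁻¹ • (w - (ℝ ∙ u).starProjection w) := by
    rw [← hproj]
    match_scalars <;> field_simp
  rw [hdiff, smul_eq_zero, or_iff_right (inv_ne_zero hN), sub_eq_zero, eq_comm,
    Submodule.starProjection_eq_self_iff]

end InvNormSMul

theorem forall_inner_eq_zero_of_orthogonal_iff {E : Type*} [NormedAddCommGroup E]
    [InnerProductSpace ℝ E] (x γ : E) :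
    (∀ v, ⟪v, x⟫ = 0 → ⟪γ, v⟫ = 0) ↔ ∃ c : ℝ, γ = c • x := by
  constructor
  · intro h
    have hγ : γ ∈ (ℝ ∙ x)ᗮᗮ := fun u hu =>
      real_inner_comm γ u ▸ h u (Submodule.mem_orthogonal_singleton_iff_inner_left.1 hu)
    rw [Submodule.orthogonal_orthogonal] at hγ
    obtain ⟨c, hc⟩ := Submodule.mem_span_singleton.1 hγ
    exact ⟨c, hc.symm⟩
  · rintro ⟨c, rfl⟩ v hv
    rw [real_inner_smul_left, real_inner_comm, hv, mul_zero]

theorem EuclideanSpace.mem_span_singleton_iff_cross_eq_zero {u w : EuclideanSpace ℝ (Fin 2)}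
    (hu : u ≠ 0) : w ∈ ℝ ∙ u ↔ u 0 * w 1 - u 1 * w 0 = 0 := by
  rw [Submodule.mem_span_singleton]
  constructor
  · rintro ⟨c, rfl⟩
    simp only [PiLp.smul_apply, smul_eq_mul]
    ring
  · intro h
    have : u 0 ≠ 0 ∨ u 1 ≠ 0 := by
      by_contra! h0
      exact hu (by ext i; fin_cases i <;> simp [h0])
    rcases this with h0 | h1
    · refine ⟨w 0 / u 0, ?_⟩
      ext i
      fin_cases i
      · simp [h0]
      · simp only [Fin.mk_one, PiLp.smul_apply, smul_eq_mul]
        field_simp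
        linarith
    · refine ⟨w 1 / u 1, ?_⟩
      ext i
      fin_cases i
      · simp only [Fin.zero_eta, PiLp.smul_apply, smul_eq_mul]
        field_simp
        linarith
      · simp [h1]

section PsiMap

variable {m : ℕ} {P Q : EuclideanSpace ℝ (Fin m) → ℝ} {x : EuclideanSpace ℝ (Fin m)}

@[simp]
theorem psiMap_apply_zero : psiMap P Q x 0 = P x := rfl

@[simp]
theorem psiMap_apply_one : psiMap P Q x 1 = Q x := rfl

theorem hasFDerivAt_psiMap {P' Q' : EuclideanSpace ℝ (Fin m) →L[ℝ] ℝ}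
    (hP : HasFDerivAt P P' x) (hQ : HasFDerivAt Q Q' x) :
    HasFDerivAt (psiMap P Q)
      ((EuclideanSpace.equiv (Fin 2) ℝ).symm.toContinuousLinearMap ∘L .pi ![P', Q']) x := by
  rw [← hasFDerivWithinAt_univ, hasFDerivWithinAt_piLp]
  intro i
  fin_cases i
  exacts [hP.hasFDerivWithinAt, hQ.hasFDerivWithinAt]

end PsiMap

theorem stmt_7_general {m : ℕ} (P Q : EuclideanSpace ℝ (Fin m) → ℝ) (x : EuclideanSpace ℝ (Fin m))
    (hP : DifferentiableAt ℝ P x) (hQ : DifferentiableAt ℝ Q x)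
    (hne : psiMap P Q x ≠ 0) :
    ((∀ v : EuclideanSpace ℝ (Fin m), ⟪v, x⟫ = 0 →
        fderiv ℝ (fun y => ‖psiMap P Q y‖⁻¹ • psiMap P Q y) x v = 0) ↔
      ∃ c : ℝ, P x • gradient Q x - Q x • gradient P x = c • x) ∧
    ((¬∃ c : ℝ, P x • gradient Q x - Q x • gradient P x = c • x) →
      ∃ v : EuclideanSpace ℝ (Fin m), ⟪v, x⟫ = 0 ∧
        fderiv ℝ (fun y => ‖psiMap P Q y‖⁻¹ • psiMap P Q y) x v ≠ 0) := by
  have hφ := (hasFDerivAt_psiMap hP.hasFDerivAt hQ.hasFDerivAt).inv_norm_smul hne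
  have hDφ (v : EuclideanSpace ℝ (Fin m)) :
      fderiv ℝ (fun y => ‖psiMap P Q y‖⁻¹ • psiMap P Q y) x v = 0 ↔
        ⟪P x • gradient Q x - Q x • gradient P x, v⟫ = 0 := by
    rw [hφ.fderiv]
    simp only [sub_apply, smul_apply, ContinuousLinearMap.smulRight_apply,
      ContinuousLinearMap.comp_apply, coe_innerSL_apply]
    rw [inv_norm_smul_sub_inner_smul_eq_zero_iff hne,
      EuclideanSpace.mem_span_singleton_iff_cross_eq_zero hne]
    simp [inner_sub_left, real_inner_smul_left, inner_gradient_left]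
  have hiff := (forall_congr' fun v => imp_congr_right fun _ => hDφ v).trans
    (forall_inner_eq_zero_of_orthogonal_iff x _)
  refine ⟨hiff, fun hγ => ?_⟩
  by_contra! hDφ_zero
  exact hγ (hiff.1 hDφ_zero)

/-- For `ψ = (P,Q)` differentiable at `x` with `ψ(x) ≠ 0` and `x ≠ 0`, and
`φ(y) = ψ(y)/‖ψ(y)‖`, the differential of `φ` at `x` vanishes on the tangent space
`{v : ⟪v, x⟫ = 0}` of the sphere through `x` iff `γ(x) := P(x)∇Q(x) − Q(x)∇P(x)` is a scalar
multiple of `x`; in particular, if `γ(x)` is not a scalar multiple of `x` then there is a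
tangent vector `v` with `Dφ(x)(v) ≠ 0`. -/
theorem stmt_7 {m : ℕ} (P Q : EuclideanSpace ℝ (Fin m) → ℝ) (x : EuclideanSpace ℝ (Fin m))
    (hP : DifferentiableAt ℝ P x) (hQ : DifferentiableAt ℝ Q x)
    (hne : psiMap P Q x ≠ 0) (hx : x ≠ 0) :
    ((∀ v : EuclideanSpace ℝ (Fin m), ⟪v, x⟫ = 0 →
        fderiv ℝ (fun y => ‖psiMap P Q y‖⁻¹ • psiMap P Q y) x v = 0) ↔
      ∃ c : ℝ, P x • gradient Q x - Q x • gradient P x = c • x) ∧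
    ((¬∃ c : ℝ, P x • gradient Q x - Q x • gradient P x = c • x) →
      ∃ v : EuclideanSpace ℝ (Fin m), ⟪v, x⟫ = 0 ∧
        fderiv ℝ (fun y => ‖psiMap P Q y‖⁻¹ • psiMap P Q y) x v ≠ 0) :=
  stmt_7_general P Q x hP hQ hne
end
end

section
/- For all real numbers θ, x, y: if y·cos θ + (x·y² + x³)·sin θ = 0 and x·cos θ − (y·x² + y³)·sin θ = 0, then x = 0 and y = 0. Consequently, for the map ψ(x,y) = (x, y·x² + y³), at every point (x,y) ≠ (0,0) and every θ, the gradient ∇Ψ_θ(x,y) = (cos θ − 2xy·sin θ, −(x² + 3y²)·sin θ) is not a scalar multiple of the position vector (x,y) on the set Ψ_θ = 0. -/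
/-!
With `r = x² + y²`, the combinations `y·(first) + x·(second)` and `x·(first) − y·(second)` of the
two equations give `r·cos θ = 0` and `r²·sin θ = 0`; since `cos θ` and `sin θ` never vanish
together, `r = 0`. A gradient parallel to `(x, y)` is orthogonal to `(−y, x)`, which is exactly the
first equation.
-/

lemma eq_zero_and_eq_zero_of_rotation_system {K : Type*} [Field K] [LinearOrder K]
    [IsStrictOrderedRing K] {a b x y : K} (hab : a ≠ 0 ∨ b ≠ 0)
    (h₁ : y * a + (x * y ^ 2 + x ^ 3) * b = 0) (h₂ : x * a - (y * x ^ 2 + y ^ 3) * b = 0) :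
    x = 0 ∧ y = 0 := by
  by_contra hxy
  have hr : x ^ 2 + y ^ 2 ≠ 0 := by
    contrapose! hxy
    exact ⟨by nlinarith [sq_nonneg x, sq_nonneg y], by nlinarith [sq_nonneg x, sq_nonneg y]⟩
  have ha : (x ^ 2 + y ^ 2) * a = 0 := by linear_combination y * h₁ + x * h₂
  have hb : (x ^ 2 + y ^ 2) ^ 2 * b = 0 := by linear_combination x * h₁ - y * h₂
  rcases hab with hab | hab
  · exact hab ((mul_eq_zero.1 ha).resolve_left hr)
  · exact hab ((mul_eq_zero.1 hb).resolve_left (pow_ne_zero 2 hr))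

lemma Real.cos_ne_zero_or_sin_ne_zero (θ : ℝ) : Real.cos θ ≠ 0 ∨ Real.sin θ ≠ 0 := by
  by_contra! h
  simpa [h.1, h.2] using Real.sin_sq_add_cos_sq θ

lemma Prod.cross_eq_zero_of_eq_smul {R : Type*} [CommRing R] {u v x y c : R}
    (h : ((u, v) : R × R) = c • ((x, y) : R × R)) : y * u - x * v = 0 := by
  simp only [Prod.smul_mk, smul_eq_mul, Prod.mk.injEq] at h
  rw [h.1, h.2]
  ring

/-- For all real `θ, x, y`: if `y·cos θ + (x·y² + x³)·sin θ = 0` and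
`x·cos θ − (y·x² + y³)·sin θ = 0`, then `x = 0` and `y = 0`. Consequently, for the map
`ψ(x,y) = (x, y·x² + y³)`, at every `(x,y) ≠ (0,0)` with `Ψ_θ(x,y) = 0`, the gradient
`∇Ψ_θ(x,y) = (cos θ − 2xy·sin θ, −(x² + 3y²)·sin θ)` is not a scalar multiple of `(x,y)`. -/
theorem stmt_16 :
    (∀ θ x y : ℝ,
      y * Real.cos θ + (x * y ^ 2 + x ^ 3) * Real.sin θ = 0 →
      x * Real.cos θ - (y * x ^ 2 + y ^ 3) * Real.sin θ = 0 →
      x = 0 ∧ y = 0) ∧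
    (∀ θ x y : ℝ, (x, y) ≠ (0, 0) →
      Real.cos θ * x - Real.sin θ * (y * x ^ 2 + y ^ 3) = 0 →
      ¬∃ c : ℝ,
        ((Real.cos θ - 2 * x * y * Real.sin θ, -(x ^ 2 + 3 * y ^ 2) * Real.sin θ) : ℝ × ℝ) =
          c • ((x, y) : ℝ × ℝ)) := by
  refine ⟨fun θ x y ↦ eq_zero_and_eq_zero_of_rotation_system (Real.cos_ne_zero_or_sin_ne_zero θ),
    ?_⟩
  rintro θ x y hxy hΨ ⟨c, hc⟩
  have hcross := Prod.cross_eq_zero_of_eq_smul hc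
  obtain ⟨rfl, rfl⟩ := eq_zero_and_eq_zero_of_rotation_system (x := x) (y := y)
    (Real.cos_ne_zero_or_sin_ne_zero θ) (by linear_combination hcross) (by linear_combination hΨ)
  exact hxy rfl
end

section
/- Let P(x,y,z) = z·(x² + y² + z²) and Q(x,y,z) = y − x³. For all real numbers θ, λ, x, y, z with λ ≠ 0: if 2xz·cos θ + 3x²·sin θ = λx, and 2yz·cos θ − sin θ = λy, and (x² + y² + 3z²)·cos θ = λz, and cos θ · z(x² + y² + z²) = sin θ · (y − x³), then x = 0, y = 0 and z = 0. (The gradient of the Seade family member Ψ_θ is never a nonzero scalar multiple of the position vector at a nonzero point of Ψ_θ⁻¹(0).) -/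
/-!
Pairing the gradient equation with the position vector `v = (x, y, z)` gives, by Euler's
identity, `λ |v|² = 3 Ψ_θ(v) + 2 sin θ · y = 2 sin θ · y`: `P` is homogeneous cubic, and `Q`
differs from its cubic part by the linear term `y`. Eliminating `sin θ` between this and the
`y`- and `z`-components leaves `cos θ · |v|⁴ (|v|² + 2y² + 2z²) = 0`. If `cos θ = 0`, the
`y`-component reads `sin θ = -λ y`, so `λ (|v|² + 2y²) = 0`; either way `v = 0`.

No trigonometry is involved: `cos θ` and `sin θ` may be any coefficients `c` and `s` of a
linearly ordered commutative ring.
-/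

namespace SeadeFamily

variable {R : Type*} [CommRing R] {c s lam x y z : R}

theorem lam_mul_sq_sum_eq (h1 : 2 * x * z * c + 3 * x ^ 2 * s = lam * x)
    (h2 : 2 * y * z * c - s = lam * y) (h3 : (x ^ 2 + y ^ 2 + 3 * z ^ 2) * c = lam * z)
    (h4 : c * (z * (x ^ 2 + y ^ 2 + z ^ 2)) = s * (y - x ^ 3)) :
    lam * (x ^ 2 + y ^ 2 + z ^ 2) = 2 * s * y := by
  linear_combination 3 * h4 - x * h1 - y * h2 - z * h3

variable [LinearOrder R] [IsStrictOrderedRing R]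

theorem eq_zero_of_sq_add_sq_add_sq_eq_zero (h : x ^ 2 + y ^ 2 + z ^ 2 = 0) :
    x = 0 ∧ y = 0 ∧ z = 0 := by
  have hx := sq_nonneg x
  have hy := sq_nonneg y
  have hz := sq_nonneg z
  exact ⟨pow_eq_zero_iff two_ne_zero |>.mp (by linarith),
    pow_eq_zero_iff two_ne_zero |>.mp (by linarith),
    pow_eq_zero_iff two_ne_zero |>.mp (by linarith)⟩

theorem c_eq_zero_or_sq_sum_eq_zero (h2 : 2 * y * z * c - s = lam * y)
    (h3 : (x ^ 2 + y ^ 2 + 3 * z ^ 2) * c = lam * z)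
    (hr : lam * (x ^ 2 + y ^ 2 + z ^ 2) = 2 * s * y) :
    c = 0 ∨ x ^ 2 + y ^ 2 + z ^ 2 = 0 := by
  set r := x ^ 2 + y ^ 2 + z ^ 2
  have h : c * r ^ 2 * (x ^ 2 + 3 * y ^ 2 + 3 * z ^ 2) = 0 := by
    linear_combination (r + 2 * y ^ 2) * (r * h3 + z * hr) - 2 * y * z * (r * h2 + y * hr)
  rcases mul_eq_zero.mp h with hcr | hq
  · exact (mul_eq_zero.mp hcr).imp_right (pow_eq_zero_iff two_ne_zero).mp
  · right
    nlinarith [sq_nonneg x, sq_nonneg y, sq_nonneg z]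

theorem sq_sum_eq_zero_of_c_eq_zero (hlam : lam ≠ 0) (h2 : 2 * y * z * c - s = lam * y)
    (hr : lam * (x ^ 2 + y ^ 2 + z ^ 2) = 2 * s * y) (hc : c = 0) :
    x ^ 2 + y ^ 2 + z ^ 2 = 0 := by
  have h : lam * (x ^ 2 + y ^ 2 + z ^ 2 + 2 * y ^ 2) = 0 := by
    linear_combination hr - 2 * y * h2 + 4 * y ^ 2 * z * hc
  have := (mul_eq_zero.mp h).resolve_left hlam
  nlinarith [sq_nonneg x, sq_nonneg y, sq_nonneg z]

end SeadeFamily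

open SeadeFamily in
/-- For `P(x,y,z) = z·(x² + y² + z²)` and `Q(x,y,z) = y − x³`, the gradient of
the Seade family member `Ψ_θ` is never a nonzero scalar multiple of the position vector at a
nonzero point of `Ψ_θ⁻¹(0)`: the displayed system with `λ ≠ 0` has only the trivial
solution. -/
theorem stmt_18 (θ lam x y z : ℝ) (hlam : lam ≠ 0)
    (h1 : 2 * x * z * Real.cos θ + 3 * x ^ 2 * Real.sin θ = lam * x)
    (h2 : 2 * y * z * Real.cos θ - Real.sin θ = lam * y)
    (h3 : (x ^ 2 + y ^ 2 + 3 * z ^ 2) * Real.cos θ = lam * z)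
    (h4 : Real.cos θ * (z * (x ^ 2 + y ^ 2 + z ^ 2)) = Real.sin θ * (y - x ^ 3)) :
    x = 0 ∧ y = 0 ∧ z = 0 := by
  have hr := lam_mul_sq_sum_eq h1 h2 h3 h4
  apply eq_zero_of_sq_add_sq_add_sq_eq_zero
  rcases c_eq_zero_or_sq_sum_eq_zero h2 h3 hr with hc | hr0
  · exact sq_sum_eq_zero_of_c_eq_zero hlam h2 hr hc
  · exact hr0
end
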